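/- arXiv:1709.03390 — 5 statements merged into one kernel-verified Lean document; each statement's English description precedes it below -/
import Mathlib

section
/- Let N ≥ 1, let b_1 > b_2 > ... > b_{N+1} > 0 and 0 < a_1 < a_2 < ... < a_{N+1}. With the convention 1/b_0 := 0, define γ*_j = P · (1/a_j)(1/b_j − 1/b_{j-1}) / ∑_{k=1}^{N+1} (1/a_k)(1/b_k − 1/b_{k-1}) for a given P > 0. Then γ*_j ≥ 0 for all j, ∑_j γ*_j = P, and for every k ∈ {1,...,N+1}, b_k ∑_{j=1}^{k} a_j γ*_j = P / ∑_{k=1}^{N+1} (1/a_k)(1/b_k − 1/b_{k-1}). Moreover, γ* maximizes min_{1≤k≤N+1} b_k ∑_{j=1}^{k} a_j γ_j over all nonnegative γ with ∑_{j=1}^{N+1} γ_j ≤ P. -/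
open Finset

private lemma telescope (f : ℕ → ℝ) (k : ℕ) :
    ∑ j ∈ Finset.Icc 1 k, (f j - f (j - 1)) = f k - f 0 := by
  induction k with
  | zero => simp
  | succ n ih =>
    rw [Finset.sum_Icc_succ_top (by omega : 1 ≤ n + 1), ih]
    simp

/-- LP equalization result (Theorem 1): with decreasing gains `b`, increasing `a`,
and the convention `1/b₀ = 0`, the allocation `γ*` is feasible, equalizes all the
terms `b k ∑_{j≤k} a j γ j` to `P / D`, and maximizes the minimum of these terms. -/
theorem stmt1 (N : ℕ) (hN : 1 ≤ N) (a b : ℕ → ℝ) (P : ℝ) (hP : 0 < P)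
    (hb_pos : ∀ k ∈ Finset.Icc 1 (N + 1), 0 < b k)
    (hb_dec : ∀ k ∈ Finset.Icc 1 N, b (k + 1) < b k)
    (ha_pos : ∀ k ∈ Finset.Icc 1 (N + 1), 0 < a k)
    (ha_inc : ∀ k ∈ Finset.Icc 1 N, a k < a (k + 1))
    (invb : ℕ → ℝ) (hinvb : ∀ k, invb k = if k = 0 then 0 else 1 / b k)
    (D : ℝ) (hD : D = ∑ k ∈ Finset.Icc 1 (N + 1), (1 / a k) * (invb k - invb (k - 1)))
    (γstar : ℕ → ℝ)
    (hγstar : ∀ j, γstar j = P * ((1 / a j) * (invb j - invb (j - 1))) / D) :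
    (∀ j ∈ Finset.Icc 1 (N + 1), 0 ≤ γstar j) ∧
    (∑ j ∈ Finset.Icc 1 (N + 1), γstar j) = P ∧
    (∀ k ∈ Finset.Icc 1 (N + 1),
      b k * ∑ j ∈ Finset.Icc 1 k, a j * γstar j = P / D) ∧
    (∀ γ : ℕ → ℝ, (∀ j ∈ Finset.Icc 1 (N + 1), 0 ≤ γ j) →
      (∑ j ∈ Finset.Icc 1 (N + 1), γ j) ≤ P →
      ∃ k ∈ Finset.Icc 1 (N + 1),
        b k * ∑ j ∈ Finset.Icc 1 k, a j * γ j ≤ P / D) := by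
  have ha' : ∀ j, 1 ≤ j → j ≤ N + 1 → 0 < a j := fun j h1 h2 =>
    ha_pos j (mem_Icc.mpr ⟨h1, h2⟩)
  have hb' : ∀ j, 1 ≤ j → j ≤ N + 1 → 0 < b j := fun j h1 h2 =>
    hb_pos j (mem_Icc.mpr ⟨h1, h2⟩)
  have hΔ : ∀ k, 1 ≤ k → k ≤ N + 1 → 0 < invb k - invb (k - 1) := by
    intro k h1 h2
    rcases Nat.eq_or_lt_of_le h1 with h | h
    · rw [← h]
      simp only [hinvb]
      norm_num
      exact hb' 1 le_rfl (by omega)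
    · have hbk : b k < b (k - 1) := by
        have := hb_dec (k - 1) (mem_Icc.mpr ⟨by omega, by omega⟩)
        rwa [Nat.sub_add_cancel (by omega : 1 ≤ k)] at this
      rw [hinvb k, hinvb (k - 1)]
      simp only [show k ≠ 0 by omega, show k - 1 ≠ 0 by omega, if_neg, ite_false]
      have h1 : 0 < b k := hb' k h1 h2
      have h2' : 0 < b (k - 1) := hb' (k - 1) (by omega) (by omega)
      have : 1 / b (k - 1) < 1 / b k := one_div_lt_one_div_of_lt h1 hbk
      linarith
  have hc : ∀ k, 1 ≤ k → k ≤ N + 1 → 0 < (1 / a k) * (invb k - invb (k - 1)) := by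
    intro k h1 h2
    exact mul_pos (one_div_pos.mpr (ha' k h1 h2)) (hΔ k h1 h2)
  have hDpos : 0 < D := by
    rw [hD]
    apply Finset.sum_pos
    · intro k hk
      rw [mem_Icc] at hk
      exact hc k hk.1 hk.2
    · exact ⟨1, mem_Icc.mpr ⟨le_rfl, by omega⟩⟩
  have hDne : D ≠ 0 := ne_of_gt hDpos
  -- partial sums of a j γstar j telescope
  have hS : ∀ k, k ≤ N + 1 →
      ∑ j ∈ Finset.Icc 1 k, a j * γstar j = P / D * invb k := by
    intro k hk
    have : ∀ j ∈ Finset.Icc 1 k, a j * γstar j = P / D * (invb j - invb (j - 1)) := by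
      intro j hj
      rw [mem_Icc] at hj
      have haj : a j ≠ 0 := ne_of_gt (ha' j hj.1 (le_trans hj.2 hk))
      rw [hγstar j]
      field_simp
    rw [Finset.sum_congr rfl this, ← Finset.mul_sum, telescope invb k]
    simp [hinvb]
  refine ⟨?_, ?_, ?_, ?_⟩
  · intro j hj
    rw [mem_Icc] at hj
    rw [hγstar j]
    have := hc j hj.1 hj.2
    positivity
  · have : ∀ j ∈ Finset.Icc 1 (N + 1),
        γstar j = P / D * ((1 / a j) * (invb j - invb (j - 1))) := by
      intro j _
      rw [hγstar j]; ring
    rw [Finset.sum_congr rfl this, ← Finset.mul_sum, ← hD]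
    field_simp
  · intro k hk
    rw [mem_Icc] at hk
    rw [hS k hk.2, hinvb k]
    simp only [show k ≠ 0 by omega, if_neg, ite_false]
    have hbk : b k ≠ 0 := ne_of_gt (hb' k hk.1 hk.2)
    field_simp
  · intro γ hγnn hγsum
    by_contra hcon
    push_neg at hcon
    -- S m := partial sums of a j * γ j
    set S : ℕ → ℝ := fun m => ∑ j ∈ Finset.Icc 1 m, a j * γ j with hSdef
    have hSbig : ∀ k, 1 ≤ k → k ≤ N + 1 → P / D * invb k < S k := by
      intro k h1 h2
      have := hcon k (mem_Icc.mpr ⟨h1, h2⟩)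
      have hbk : 0 < b k := hb' k h1 h2
      rw [hinvb k]
      simp only [show k ≠ 0 by omega, if_neg, ite_false]
      have hSk : S k = ∑ j ∈ Finset.Icc 1 k, a j * γ j := rfl
      rw [hSk, mul_one_div, div_lt_iff₀ hbk]
      linarith [this]
    -- key induction: partial sums of γ dominate
    have key : ∀ m, 1 ≤ m → m ≤ N + 1 →
        P / D * (∑ j ∈ Finset.Icc 1 m, (1 / a j) * (invb j - invb (j - 1)))
          + (1 / a m) * (S m - P / D * invb m)
          ≤ ∑ j ∈ Finset.Icc 1 m, γ j := by
      intro m h1 h2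
      induction m with
      | zero => omega
      | succ n ih =>
        rcases Nat.eq_or_lt_of_le h1 with h | h
        · -- base case n + 1 = 1
          have hn : n = 0 := by omega
          subst hn
          have ha1 : 0 < a 1 := ha' 1 le_rfl (by omega)
          have ha1ne : a 1 ≠ 0 := ne_of_gt ha1
          have hS1 : S 1 = a 1 * γ 1 := by simp [hSdef]
          have h0 : invb (1 - 1) = 0 := by rw [hinvb]; simp
          simp only [Nat.zero_add, Finset.Icc_self, Finset.sum_singleton, hS1, h0]
          apply le_of_eq
          field_simp
          ring
        · -- inductive step: 1 ≤ n
          have hn1 : 1 ≤ n := by omega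
          have hn2 : n ≤ N + 1 := by omega
          have ihn := ih hn1 hn2
          have han : 0 < a n := ha' n hn1 hn2
          have han1 : 0 < a (n + 1) := ha' (n + 1) (by omega) h2
          have hainc : a n ≤ a (n + 1) :=
            le_of_lt (ha_inc n (mem_Icc.mpr ⟨hn1, by omega⟩))
          have hSn : S (n + 1) = S n + a (n + 1) * γ (n + 1) := by
            simp only [hSdef]
            rw [Finset.sum_Icc_succ_top (by omega : 1 ≤ n + 1)]
          have hSnge : P / D * invb n ≤ S n := le_of_lt (hSbig n hn1 hn2)
          rw [Finset.sum_Icc_succ_top (by omega : 1 ≤ n + 1),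
            Finset.sum_Icc_succ_top (by omega : 1 ≤ n + 1), mul_add]
          simp only [Nat.add_sub_cancel]
          have hmono : (1 / a (n + 1)) * (S n - P / D * invb n)
              ≤ (1 / a n) * (S n - P / D * invb n) := by
            apply mul_le_mul_of_nonneg_right _ (by linarith)
            exact one_div_le_one_div_of_le han hainc
          have ha1ne : a (n + 1) ≠ 0 := ne_of_gt han1
          have hexp : P / D * (1 / a (n + 1) * (invb (n + 1) - invb n))
              + (1 / a (n + 1)) * (S (n + 1) - P / D * invb (n + 1))
              = γ (n + 1) + (1 / a (n + 1)) * (S n - P / D * invb n) := by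
            rw [hSn]
            field_simp
            ring
          linarith [hexp]
    -- conclude
    have hlast := key (N + 1) (by omega) le_rfl
    rw [← hD] at hlast
    have hSN : P / D * invb (N + 1) < S (N + 1) := hSbig (N + 1) (by omega) le_rfl
    have haN : 0 < a (N + 1) := ha' (N + 1) (by omega) le_rfl
    have hpos : 0 < (1 / a (N + 1)) * (S (N + 1) - P / D * invb (N + 1)) :=
      mul_pos (one_div_pos.mpr haN) (by linarith)
    have : P / D * D = P := by field_simp
    linarith
end

section
/- Let N ≥ 1 and let real numbers z_0 = 1 ≤ z_1 ≤ z_2 ≤ ... ≤ z_N ≤ z_{N+1}. Define F(z_1,...,z_N) = z_1 + ∑_{k=2}^{N+1} (z_k − z_{k-1}) / (∑_{l=0}^{k-1} z_l). Suppose z_i < w < z_{i+1} for some 0 ≤ i ≤ N. Then the corresponding (N+1)-variable objective obtained by inserting w between z_i and z_{i+1} is strictly smaller than F(z_1,...,z_N). -/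
open Finset

/-!
Write the objective as `1 + ∑_{k ≤ M} (z (k+1) - z k) / (z 0 + ⋯ + z k)`. Inserting `w`
between `z i` and `z (i+1)` leaves the hops before `i` unchanged, only enlarges the
denominators of the hops after it, and splits the hop `(z (i+1) - z i) / T` into
`(w - z i) / T + (z (i+1) - w) / (T + w)`, which is strictly smaller because the second
piece has the larger denominator `T + w`.
-/

def insertAt {α : Type*} (z : ℕ → α) (i : ℕ) (w : α) (k : ℕ) : α :=
  if k ≤ i then z k else if k = i + 1 then w else z (k - 1)

section insertAt

variable {α : Type*} (z : ℕ → α) (i : ℕ) (w : α)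

theorem insertAt_of_le {k : ℕ} (hk : k ≤ i) : insertAt z i w k = z k := if_pos hk

theorem insertAt_succ_self : insertAt z i w (i + 1) = w := by
  simp [insertAt]

theorem insertAt_add_two (k : ℕ) : insertAt z i w (i + 2 + k) = z (i + 1 + k) := by
  rw [insertAt, if_neg (by omega), if_neg (by omega)]
  congr 1
  omega

variable [AddCommMonoid α]

theorem sum_range_insertAt_of_le {k : ℕ} (hk : k ≤ i + 1) :
    ∑ l ∈ range k, insertAt z i w l = ∑ l ∈ range k, z l :=
  sum_congr rfl fun l hl => insertAt_of_le z i w (by rw [mem_range] at hl; omega)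

theorem sum_range_insertAt_add_two (k : ℕ) :
    ∑ l ∈ range (i + 2 + k), insertAt z i w l = ∑ l ∈ range (i + 1 + k), z l + w := by
  induction k with
  | zero =>
    rw [add_zero, add_zero, sum_range_succ, sum_range_insertAt_of_le z i w le_rfl,
      insertAt_succ_self]
  | succ k ih =>
    rw [← add_assoc, sum_range_succ, ih, insertAt_add_two, ← add_assoc, sum_range_succ]
    abel

end insertAt

noncomputable def hopTerm (z : ℕ → ℝ) (k : ℕ) : ℝ :=
  (z (k + 1) - z k) / ∑ l ∈ range (k + 1), z l

theorem add_sum_Icc_eq_one_add_sum_hopTerm (z : ℕ → ℝ) (hz0 : z 0 = 1) (M : ℕ) :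
    z 1 + ∑ k ∈ Icc 2 (M + 1), (z k - z (k - 1)) / ∑ l ∈ range k, z l
      = 1 + ∑ k ∈ range (M + 1), hopTerm z k := by
  induction M with
  | zero => simp [hopTerm, hz0]
  | succ M ih =>
    rw [sum_Icc_succ_top (by omega), ← add_assoc, ih, sum_range_succ (hopTerm z) (M + 1),
      add_assoc]
    rfl

theorem pos_of_pos_zero_of_le_succ {z : ℕ → ℝ} {n : ℕ} (hz0 : 0 < z 0)
    (hmono : ∀ k < n, z k ≤ z (k + 1)) :
    ∀ l ≤ n, 0 < z l
  | 0, _ => hz0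
  | l + 1, hl => (pos_of_pos_zero_of_le_succ hz0 hmono l (by omega)).trans_le (hmono l hl)

theorem div_add_div_add_lt_div {T a w b : ℝ} (hT : 0 < T) (hw : 0 < w) (hwb : w < b) :
    (w - a) / T + (b - w) / (T + w) < (b - a) / T := by
  have hsplit : (w - a) / T + (b - w) / T = (b - a) / T := by ring
  have hshrink : (b - w) / (T + w) < (b - w) / T :=
    div_lt_div_of_pos_left (by linarith) hT (by linarith)
  linarith

theorem sum_hopTerm_insertAt_lt {z : ℕ → ℝ} {i r : ℕ} {w : ℝ} (hz0 : 0 < z 0)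
    (hmono : ∀ k ≤ i + r, z k ≤ z (k + 1)) (hzw : z i < w) (hwz : w < z (i + 1)) :
    ∑ k ∈ range (i + r + 2), hopTerm (insertAt z i w) k
      < ∑ k ∈ range (i + r + 1), hopTerm z k := by
  have hpos : ∀ l ≤ i + r + 1, 0 < z l :=
    pos_of_pos_zero_of_le_succ hz0 fun k hk => hmono k (by omega)
  have hsum_pos : ∀ k ≤ i + r, 0 < ∑ l ∈ range (k + 1), z l := fun k hk =>
    sum_pos (fun l hl => hpos l (by rw [mem_range] at hl; omega)) nonempty_range_add_one
  have hw : 0 < w := (hpos i (by omega)).trans hzw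
  have head : ∀ k < i, hopTerm (insertAt z i w) k = hopTerm z k := fun k hk => by
    rw [hopTerm, hopTerm, insertAt_of_le z i w (by omega), insertAt_of_le z i w hk.le,
      sum_range_insertAt_of_le z i w (by omega)]
  have middle : hopTerm (insertAt z i w) i + hopTerm (insertAt z i w) (i + 1) < hopTerm z i := by
    have h2 := sum_range_insertAt_add_two z i w 0
    rw [add_zero, add_zero] at h2
    rw [hopTerm, hopTerm, hopTerm, insertAt_succ_self, insertAt_of_le z i w le_rfl,
      sum_range_insertAt_of_le z i w le_rfl, h2, show i + 1 + 1 = i + 2 + 0 from rfl,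
      insertAt_add_two, add_zero]
    exact div_add_div_add_lt_div (hsum_pos i (by omega)) hw hwz
  have tail : ∀ k < r, hopTerm (insertAt z i w) (i + 2 + k) ≤ hopTerm z (i + 1 + k) :=
    fun k hk => by
      rw [hopTerm, hopTerm, insertAt_add_two, show i + 2 + k + 1 = i + 2 + (k + 1) by ring,
        insertAt_add_two, sum_range_insertAt_add_two]
      exact div_le_div_of_nonneg_left (sub_nonneg.2 (hmono _ (by omega)))
        (hsum_pos _ (by omega)) (le_add_of_nonneg_right hw.le)
  rw [show i + r + 2 = i + 2 + r by ring, sum_range_add, sum_range_succ, sum_range_succ,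
    show i + r + 1 = i + 1 + r by ring, sum_range_add, sum_range_succ, sum_congr rfl fun k hk =>
      head k (mem_range.1 hk)]
  have := sum_le_sum fun k hk => tail k (mem_range.1 hk)
  linarith

theorem stmt7_general (N : ℕ) (z : ℕ → ℝ) (hz0 : z 0 = 1)
    (hmono : ∀ k, k ≤ N → z k ≤ z (k + 1))
    (i : ℕ) (hi : i ≤ N) (w : ℝ) (hw1 : z i < w) (hw2 : w < z (i + 1))
    (z' : ℕ → ℝ)
    (hz' : ∀ k, z' k = if k ≤ i then z k else if k = i + 1 then w else z (k - 1)) :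
    z' 1 + ∑ k ∈ Finset.Icc 2 (N + 2),
        (z' k - z' (k - 1)) / (∑ l ∈ Finset.range k, z' l)
      < z 1 + ∑ k ∈ Finset.Icc 2 (N + 1),
        (z k - z (k - 1)) / (∑ l ∈ Finset.range k, z l) := by
  obtain rfl : z' = insertAt z i w := funext hz'
  obtain ⟨r, rfl⟩ := Nat.exists_eq_add_of_le hi
  have hz'0 : insertAt z i w 0 = 1 := (insertAt_of_le z i w i.zero_le).trans hz0
  rw [add_sum_Icc_eq_one_add_sum_hopTerm _ hz'0 (i + r + 1),
    add_sum_Icc_eq_one_add_sum_hopTerm _ hz0]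
  have := sum_hopTerm_insertAt_lt (hz0 ▸ one_pos) hmono hw1 hw2
  linarith

/-- Inserting an extra relay strictly between two consecutive nodes strictly
decreases the attenuation objective
`F z = z 1 + ∑_{k=2}^{M+1} (z k − z (k-1)) / (∑_{l<k} z l)` (with `z 0 = 1`). -/
theorem stmt7 (N : ℕ) (hN : 1 ≤ N) (z : ℕ → ℝ) (hz0 : z 0 = 1)
    (hmono : ∀ k, k ≤ N → z k ≤ z (k + 1))
    (i : ℕ) (hi : i ≤ N) (w : ℝ) (hw1 : z i < w) (hw2 : w < z (i + 1))
    (z' : ℕ → ℝ)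
    (hz' : ∀ k, z' k = if k ≤ i then z k else if k = i + 1 then w else z (k - 1)) :
    z' 1 + ∑ k ∈ Finset.Icc 2 (N + 2),
        (z' k - z' (k - 1)) / (∑ l ∈ Finset.range k, z' l)
      < z 1 + ∑ k ∈ Finset.Icc 2 (N + 1),
        (z k - z (k - 1)) / (∑ l ∈ Finset.range k, z l) :=
  stmt7_general N z hz0 hmono i hi w hw1 hw2 z' hz'
end

section
/- Let N ≥ 0 and 1 ≤ z_1 ≤ z_2 ≤ ... ≤ z_N ≤ z_{N+1} = Z with Z ≥ 1. Then 1 ≤ z_1 + ∑_{k=2}^{N+1} (z_k − z_{k-1})/(1 + z_1 + ... + z_{k-1}) ≤ Z. -/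
open Finset

/-- The net attenuation objective for any feasible placement lies in `[1, Z]`:
if `z 0 = 1 ≤ z 1 ≤ ⋯ ≤ z (N+1) = Z` then
`1 ≤ z 1 + ∑_{k=2}^{N+1} (z k − z (k-1))/(∑_{l<k} z l) ≤ Z`. -/
theorem stmt8 (N : ℕ) (z : ℕ → ℝ) (Z : ℝ) (hZ : 1 ≤ Z)
    (hz0 : z 0 = 1) (hmono : ∀ k, k ≤ N → z k ≤ z (k + 1)) (hzN : z (N + 1) = Z) :
    1 ≤ z 1 + ∑ k ∈ Finset.Icc 2 (N + 1),
        (z k - z (k - 1)) / (∑ l ∈ Finset.range k, z l) ∧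
    z 1 + ∑ k ∈ Finset.Icc 2 (N + 1),
        (z k - z (k - 1)) / (∑ l ∈ Finset.range k, z l) ≤ Z := by
  have hle : ∀ i j, i ≤ j → j ≤ N + 1 → z i ≤ z j := by
    intro i j hij hj
    induction j with
    | zero => simp_all
    | succ n ih =>
      rcases Nat.lt_or_ge i (n + 1) with h | h
      · exact le_trans (ih (Nat.lt_succ_iff.mp h) (by omega)) (hmono n (by omega))
      · have : i = n + 1 := by omega
        simp [this]
  have h1 : ∀ l, l ≤ N + 1 → 1 ≤ z l := fun l hl => hz0 ▸ hle 0 l (Nat.zero_le _) hl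
  have hden : ∀ k ∈ Finset.Icc 2 (N + 1), (1 : ℝ) ≤ ∑ l ∈ Finset.range k, z l := by
    intro k hk
    simp only [Finset.mem_Icc] at hk
    calc (1 : ℝ) ≤ ∑ _l ∈ Finset.range k, (1 : ℝ) := by
          rw [Finset.sum_const, Finset.card_range, nsmul_eq_mul, mul_one]
          exact_mod_cast (by omega : 1 ≤ k)
      _ ≤ _ := Finset.sum_le_sum fun l hl => h1 l (by
          simp only [Finset.mem_range] at hl; omega)
  have hnum : ∀ k ∈ Finset.Icc 2 (N + 1), 0 ≤ z k - z (k - 1) := by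
    intro k hk
    simp only [Finset.mem_Icc] at hk
    have := hle (k - 1) k (by omega) (by omega)
    linarith
  constructor
  · have hs : (0 : ℝ) ≤ ∑ k ∈ Finset.Icc 2 (N + 1),
        (z k - z (k - 1)) / (∑ l ∈ Finset.range k, z l) :=
      Finset.sum_nonneg fun k hk =>
        div_nonneg (hnum k hk) (le_trans zero_le_one (hden k hk))
    have hz1 := h1 1 (by omega)
    linarith
  · have hterm : ∀ k ∈ Finset.Icc 2 (N + 1),
        (z k - z (k - 1)) / (∑ l ∈ Finset.range k, z l) ≤ z k - z (k - 1) := by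
      intro k hk
      exact div_le_self (hnum k hk) (hden k hk)
    have hsum := Finset.sum_le_sum hterm
    have htel : ∑ k ∈ Finset.Icc 2 (N + 1), (z k - z (k - 1)) = z (N + 1) - z 1 := by
      rw [← Finset.Ico_add_one_right_eq_Icc, Finset.sum_Ico_eq_sum_range]
      have heq : ∀ i ∈ Finset.range N, z (2 + i) - z (2 + i - 1)
          = (fun i => z (i + 1)) (i + 1) - (fun i => z (i + 1)) i := by
        intro i _
        simp only
        rw [show 2 + i - 1 = i + 1 by omega, show 2 + i = i + 1 + 1 by omega]
      rw [show N + 1 + 1 - 2 = N from by omega,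
        Finset.sum_congr rfl heq, Finset.sum_range_sub (fun i => z (i + 1)) N]
    rw [hzN] at htel
    linarith
end

section
/- Fix λ > 0. For each N ≥ 1 let a_N = e^{λ/(N+1)} and define f(N) = a_N + ∑_{k=2}^{N+1} (a_N^k − a_N^{k-1})/(1 + a_N + ... + a_N^{k-1}). Then lim_{N→∞} f(N) = 1. -/
open Finset Real Filter Topology

/-! Write `a = a_N`, so that `a ^ (N + 1) = e^λ`. Since `a ≥ 1`, the denominator
`1 + a + ⋯ + a^{k-1}` is at least `k`, so the `k`-th term is at most
`a^{k-1}(a - 1)/k ≤ e^λ (a - 1)/k`, and the whole sum is at most `e^λ (a - 1)(1 + log (N + 1))`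
by the harmonic bound. Bernoulli's inequality `1 + (N + 1)(a - 1) ≤ a^{N+1} = e^λ` gives
`a - 1 = O(1/N)`, so both `a_N → 1` and the sum is `O(log N / N) → 0`. -/

noncomputable def relayAttenuation (a : ℝ) (N : ℕ) : ℝ :=
  a + ∑ k ∈ Icc 2 (N + 1), (a ^ k - a ^ (k - 1)) / ∑ l ∈ range k, a ^ l

lemma natCast_le_geom_sum {a : ℝ} (ha : 1 ≤ a) (k : ℕ) : (k : ℝ) ≤ ∑ l ∈ range k, a ^ l := by
  simpa using sum_le_sum fun l (_ : l ∈ range k) => one_le_pow₀ (n := l) ha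

lemma pow_sub_pow_pred_div_geom_sum_le {a : ℝ} (ha : 1 ≤ a) (k : ℕ) :
    (a ^ k - a ^ (k - 1)) / ∑ l ∈ range k, a ^ l ≤ a ^ (k - 1) * (a - 1) / k := by
  cases k with
  | zero => simp
  | succ k =>
    rw [Nat.add_sub_cancel, pow_succ, ← mul_sub_one]
    exact div_le_div_of_nonneg_left (by have := one_le_pow₀ (n := k) ha; nlinarith)
      (by positivity) (natCast_le_geom_sum ha _)

lemma sum_Icc_two_inv_le_one_add_log (n : ℕ) : ∑ k ∈ Icc 2 n, (k : ℝ)⁻¹ ≤ 1 + log n := by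
  calc ∑ k ∈ Icc 2 n, (k : ℝ)⁻¹ ≤ ∑ k ∈ Icc 1 n, (k : ℝ)⁻¹ :=
        sum_le_sum_of_subset_of_nonneg (Icc_subset_Icc_left one_le_two) fun _ _ _ => by positivity
    _ = harmonic n := by simp [harmonic_eq_sum_Icc]
    _ ≤ 1 + log n := harmonic_le_one_add_log n

lemma le_relayAttenuation {a : ℝ} (ha : 1 ≤ a) (N : ℕ) : a ≤ relayAttenuation a N :=
  le_add_of_nonneg_right <| sum_nonneg fun k _ =>
    div_nonneg (sub_nonneg.2 (pow_le_pow_right₀ ha k.pred_le))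
      (sum_nonneg fun l _ => by positivity)

lemma relayAttenuation_le {a : ℝ} (ha : 1 ≤ a) (N : ℕ) :
    relayAttenuation a N ≤ a + a ^ (N + 1) * (a - 1) * (1 + log (N + 1)) := by
  refine add_le_add_right ?_ a
  calc ∑ k ∈ Icc 2 (N + 1), (a ^ k - a ^ (k - 1)) / ∑ l ∈ range k, a ^ l
      ≤ ∑ k ∈ Icc 2 (N + 1), a ^ (N + 1) * (a - 1) * (k : ℝ)⁻¹ := by
        refine sum_le_sum fun k hk => (pow_sub_pow_pred_div_geom_sum_le ha k).trans ?_
        rw [← div_eq_mul_inv]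
        gcongr
        exact (Nat.sub_le k 1).trans (mem_Icc.1 hk).2
    _ = a ^ (N + 1) * (a - 1) * ∑ k ∈ Icc 2 (N + 1), (k : ℝ)⁻¹ := (mul_sum ..).symm
    _ ≤ a ^ (N + 1) * (a - 1) * (1 + log (N + 1)) := by
        gcongr
        exact_mod_cast sum_Icc_two_inv_le_one_add_log (N + 1)

lemma tendsto_relayAttenuation {a : ℕ → ℝ} {C : ℝ} (ha : ∀ N, 1 ≤ a N)
    (hC : ∀ N, a N ^ (N + 1) ≤ C) :
    Tendsto (fun N => relayAttenuation (a N) N) atTop (𝓝 1) := by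
  have hN : Tendsto (fun N : ℕ => (N : ℝ) + 1) atTop atTop :=
    tendsto_atTop_add_const_right _ 1 tendsto_natCast_atTop_atTop
  have hinv : Tendsto (fun N : ℕ => ((N : ℝ) + 1)⁻¹) atTop (𝓝 0) := hN.inv_tendsto_atTop
  have hlog : Tendsto (fun N : ℕ => (1 + log (N + 1)) / (N + 1)) atTop (𝓝 0) := by
    have := (tendsto_pow_log_div_mul_add_atTop 1 0 1 one_ne_zero).comp hN
    simpa [add_div] using hinv.add this
  have hsub : ∀ N : ℕ, a N - 1 ≤ (C - 1) * ((N : ℝ) + 1)⁻¹ := by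
    intro N
    rw [← div_eq_mul_inv, le_div_iff₀ (by positivity)]
    have := one_add_mul_sub_le_pow (by linarith [ha N] : -1 ≤ a N) (N + 1)
    push_cast at this
    linarith [hC N]
  have hC₁ : 1 ≤ C := (one_le_pow₀ (ha 0)).trans (hC 0)
  have hlim : Tendsto a atTop (𝓝 1) := by
    refine tendsto_of_tendsto_of_tendsto_of_le_of_le tendsto_const_nhds
      (by simpa using (hinv.const_mul (C - 1)).const_add 1) ha fun N => ?_
    linarith [hsub N]
  refine tendsto_of_tendsto_of_tendsto_of_le_of_le hlim
    (by simpa using hlim.add (hlog.const_mul (C * (C - 1))))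
    (fun N => le_relayAttenuation (ha N) N) fun N => (relayAttenuation_le (ha N) N).trans ?_
  have hlog₀ : 0 ≤ 1 + log ((N : ℝ) + 1) := by
    linarith [log_nonneg (by linarith [N.cast_nonneg (α := ℝ)] : (1 : ℝ) ≤ N + 1)]
  calc a N + a N ^ (N + 1) * (a N - 1) * (1 + log (N + 1))
      ≤ a N + C * ((C - 1) * ((N : ℝ) + 1)⁻¹) * (1 + log (N + 1)) := by
        have := sub_nonneg.2 (ha N)
        gcongr
        exacts [hC N, hsub N]
    _ = a N + C * (C - 1) * ((1 + log (N + 1)) / (N + 1)) := by ring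

/-- Theorem 5: with `a_N = e^{λ/(N+1)}`, the uniform-placement net attenuation
`f N = a_N + ∑_{k=2}^{N+1} (a_N^k − a_N^{k-1})/(1 + a_N + ⋯ + a_N^{k-1})`
tends to `1` as `N → ∞`. -/
theorem stmt10 (lam : ℝ) (hlam : 0 < lam) :
    Filter.Tendsto
      (fun N : ℕ =>
        Real.exp (lam / (N + 1)) +
          ∑ k ∈ Finset.Icc 2 (N + 1),
            (Real.exp (lam / (N + 1)) ^ k - Real.exp (lam / (N + 1)) ^ (k - 1)) /
              (∑ l ∈ Finset.range k, Real.exp (lam / (N + 1)) ^ l))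
      Filter.atTop (nhds 1) := by
  refine tendsto_relayAttenuation (C := exp lam) (fun N => one_le_exp (by positivity))
    fun N => le_of_eq ?_
  rw [← exp_nat_mul]
  congr 1
  field_simp
  push_cast
  ring
end

section
/- Let J : (0,1] → ℝ be concave, increasing, and bounded, let ρ > 0, β > 0, ξ > 0. Define T J : (0,1] → ℝ by (T J)(s) = inf_{a ≥ 0} [ ∫_0^a β e^{−βz} s(e^{ρz} − 1) dz + e^{−βa} ( s(e^{ρa} − 1) + ξ + J(s e^{ρa}/(1 + s e^{ρa})) ) ]. Then T J is concave and increasing on (0,1]. -/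
open Real MeasureTheory

private noncomputable def Fbel (ρ β ξ : ℝ) (J : ℝ → ℝ) (a s : ℝ) : ℝ :=
  (∫ z in Set.Ioc (0 : ℝ) a,
        β * Real.exp (-β * z) * (s * (Real.exp (ρ * z) - 1)))
    + Real.exp (-β * a) *
        (s * (Real.exp (ρ * a) - 1) + ξ +
          J (s * Real.exp (ρ * a) / (1 + s * Real.exp (ρ * a))))

private lemma gmem {c s : ℝ} (hc : 1 ≤ c) (hs : 0 < s) :
    s * c / (1 + s * c) ∈ Set.Ioc (0 : ℝ) 1 := by
  have hc0 : 0 < c := lt_of_lt_of_le one_pos hc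
  have h1 : 0 < 1 + s * c := by nlinarith
  constructor
  · positivity
  · rw [div_le_one h1]; nlinarith

private lemma gmono {c x y : ℝ} (hc : 0 < c) (hx : 0 < x) (hxy : x ≤ y) :
    x * c / (1 + x * c) ≤ y * c / (1 + y * c) := by
  have h1 : 0 < 1 + x * c := by nlinarith
  have h2 : 0 < 1 + y * c := by nlinarith [hx.trans_le hxy]
  rw [div_le_div_iff₀ h1 h2]; nlinarith

private lemma gconc {c x y p q : ℝ} (hc : 0 < c) (hx : 0 < x) (hy : 0 < y)
    (hp : 0 ≤ p) (hq : 0 ≤ q) (hpq : p + q = 1) :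
    p * (x * c / (1 + x * c)) + q * (y * c / (1 + y * c))
      ≤ (p * x + q * y) * c / (1 + (p * x + q * y) * c) := by
  have h1 : 0 < 1 + x * c := by nlinarith
  have h2 : 0 < 1 + y * c := by nlinarith
  have h3 : 0 < 1 + (p * x + q * y) * c := by
    nlinarith [mul_nonneg hp hx.le, mul_nonneg hq hy.le]
  rw [show p * (x * c / (1 + x * c)) = p * x * c / (1 + x * c) by ring,
      show q * (y * c / (1 + y * c)) = q * y * c / (1 + y * c) by ring,
      div_add_div _ _ h1.ne' h2.ne', div_le_div_iff₀ (mul_pos h1 h2) h3]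
  have hq' : q = 1 - p := by linarith
  subst hq'
  nlinarith [mul_nonneg (mul_nonneg hp hq) (sq_nonneg (x * c - y * c))]

/-- The Bellman operator of the as-you-go deployment MDP preserves monotonicity
and concavity: if `J` is concave, increasing and bounded on `(0,1]`, then so is
`T J`, where
`(T J)(s) = inf_{a ≥ 0} [∫_0^a β e^{−βz} s(e^{ρz}−1) dz
    + e^{−βa}(s(e^{ρa}−1) + ξ + J(s e^{ρa}/(1+s e^{ρa})))]`. -/
theorem stmt19 (ρ β ξ : ℝ) (hρ : 0 < ρ) (hβ : 0 < β) (hξ : 0 < ξ)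
    (J : ℝ → ℝ)
    (hJconc : ConcaveOn ℝ (Set.Ioc (0 : ℝ) 1) J)
    (hJmono : MonotoneOn J (Set.Ioc (0 : ℝ) 1))
    (hJbdd : ∃ M : ℝ, ∀ s ∈ Set.Ioc (0 : ℝ) 1, |J s| ≤ M)
    (TJ : ℝ → ℝ)
    (hTJ : ∀ s ∈ Set.Ioc (0 : ℝ) 1,
      TJ s = sInf {v : ℝ | ∃ a : ℝ, 0 ≤ a ∧
        v = (∫ z in Set.Ioc (0 : ℝ) a,
                β * Real.exp (-β * z) * (s * (Real.exp (ρ * z) - 1)))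
          + Real.exp (-β * a) *
              (s * (Real.exp (ρ * a) - 1) + ξ +
                J (s * Real.exp (ρ * a) / (1 + s * Real.exp (ρ * a))))}) :
    MonotoneOn TJ (Set.Ioc (0 : ℝ) 1) ∧ ConcaveOn ℝ (Set.Ioc (0 : ℝ) 1) TJ := by
  obtain ⟨M0, hM0⟩ := hJbdd
  set M : ℝ := max M0 0 with hMdef
  have hMnn : 0 ≤ M := le_max_right _ _
  have hMbd : ∀ s ∈ Set.Ioc (0 : ℝ) 1, -M ≤ J s := by
    intro s hs
    have h := (abs_le.1 (hM0 s hs)).1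
    have : -M ≤ -M0 := by simp [hMdef]
    linarith [this.trans h]
  -- notation
  have hTJ' : ∀ s ∈ Set.Ioc (0 : ℝ) 1,
      TJ s = sInf {v : ℝ | ∃ a : ℝ, 0 ≤ a ∧ v = Fbel ρ β ξ J a s} := hTJ
  -- basic facts about exp coefficients
  have hc1 : ∀ a : ℝ, 0 ≤ a → (1 : ℝ) ≤ Real.exp (ρ * a) := fun a ha =>
    Real.one_le_exp (by positivity)
  have hE1 : ∀ a : ℝ, 0 ≤ a → Real.exp (-β * a) ≤ 1 := fun a ha => by
    rw [Real.exp_le_one_iff]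
    nlinarith
  -- the integral factors through s
  have hI : ∀ a s : ℝ,
      (∫ z in Set.Ioc (0 : ℝ) a,
          β * Real.exp (-β * z) * (s * (Real.exp (ρ * z) - 1)))
        = s * ∫ z in Set.Ioc (0 : ℝ) a,
            β * Real.exp (-β * z) * (Real.exp (ρ * z) - 1) := by
    intro a s
    rw [← MeasureTheory.integral_const_mul]
    congr 1; funext z; ring
  have hInn : ∀ a : ℝ,
      0 ≤ ∫ z in Set.Ioc (0 : ℝ) a,
          β * Real.exp (-β * z) * (Real.exp (ρ * z) - 1) := by
    intro a
    apply setIntegral_nonneg measurableSet_Ioc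
    intro z hz
    have h1 : (1 : ℝ) ≤ Real.exp (ρ * z) := Real.one_le_exp (by nlinarith [hz.1])
    have h2 : 0 < Real.exp (-β * z) := Real.exp_pos _
    have : 0 ≤ Real.exp (ρ * z) - 1 := by linarith
    positivity
  -- rewrite Fbel
  have hF : ∀ a s : ℝ, Fbel ρ β ξ J a s
      = s * (∫ z in Set.Ioc (0 : ℝ) a,
            β * Real.exp (-β * z) * (Real.exp (ρ * z) - 1))
        + Real.exp (-β * a) *
            (s * (Real.exp (ρ * a) - 1) + ξ +
              J (s * Real.exp (ρ * a) / (1 + s * Real.exp (ρ * a)))) := by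
    intro a s
    rw [Fbel, hI]
  -- nonemptiness
  have hne : ∀ s : ℝ,
      ({v : ℝ | ∃ a : ℝ, 0 ≤ a ∧ v = Fbel ρ β ξ J a s}).Nonempty :=
    fun s => ⟨Fbel ρ β ξ J 0 s, 0, le_refl 0, rfl⟩
  -- bounded below
  have hbdd : ∀ s ∈ Set.Ioc (0 : ℝ) 1,
      BddBelow {v : ℝ | ∃ a : ℝ, 0 ≤ a ∧ v = Fbel ρ β ξ J a s} := by
    intro s hs
    refine ⟨-M, ?_⟩
    rintro v ⟨a, ha, rfl⟩
    rw [hF]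
    have hcc := hc1 a ha
    have hgm := gmem hcc hs.1
    have hJg := hMbd _ hgm
    have hE0 : 0 < Real.exp (-β * a) := Real.exp_pos _
    have hEle := hE1 a ha
    have h1 : 0 ≤ s * (∫ z in Set.Ioc (0 : ℝ) a,
        β * Real.exp (-β * z) * (Real.exp (ρ * z) - 1)) :=
      mul_nonneg hs.1.le (hInn a)
    have h2 : -M ≤ s * (Real.exp (ρ * a) - 1) + ξ +
        J (s * Real.exp (ρ * a) / (1 + s * Real.exp (ρ * a))) := by
      nlinarith [mul_nonneg hs.1.le (sub_nonneg.2 hcc)]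
    nlinarith [mul_le_mul_of_nonneg_left h2 hE0.le, mul_le_mul_of_nonneg_right hEle hMnn]
  -- monotonicity of Fbel in s
  have hFmono : ∀ a : ℝ, 0 ≤ a → ∀ x ∈ Set.Ioc (0 : ℝ) 1, ∀ y ∈ Set.Ioc (0 : ℝ) 1,
      x ≤ y → Fbel ρ β ξ J a x ≤ Fbel ρ β ξ J a y := by
    intro a ha x hx y hy hxy
    rw [hF, hF]
    have hcc := hc1 a ha
    have hc0 : (0 : ℝ) < Real.exp (ρ * a) := Real.exp_pos _
    have hJle : J (x * Real.exp (ρ * a) / (1 + x * Real.exp (ρ * a)))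
        ≤ J (y * Real.exp (ρ * a) / (1 + y * Real.exp (ρ * a))) :=
      hJmono (gmem hcc hx.1) (gmem hcc hy.1) (gmono hc0 hx.1 hxy)
    have hE0 : 0 ≤ Real.exp (-β * a) := (Real.exp_pos _).le
    have h1 : x * (∫ z in Set.Ioc (0 : ℝ) a,
          β * Real.exp (-β * z) * (Real.exp (ρ * z) - 1))
        ≤ y * (∫ z in Set.Ioc (0 : ℝ) a,
          β * Real.exp (-β * z) * (Real.exp (ρ * z) - 1)) :=
      mul_le_mul_of_nonneg_right hxy (hInn a)
    have h2 : x * (Real.exp (ρ * a) - 1) + ξ +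
          J (x * Real.exp (ρ * a) / (1 + x * Real.exp (ρ * a)))
        ≤ y * (Real.exp (ρ * a) - 1) + ξ +
          J (y * Real.exp (ρ * a) / (1 + y * Real.exp (ρ * a))) := by
      nlinarith [mul_le_mul_of_nonneg_right hxy (sub_nonneg.2 hcc)]
    nlinarith [mul_le_mul_of_nonneg_left h2 hE0]
  -- concavity of Fbel in s
  have hFconc : ∀ a : ℝ, 0 ≤ a → ∀ x ∈ Set.Ioc (0 : ℝ) 1, ∀ y ∈ Set.Ioc (0 : ℝ) 1,
      ∀ p q : ℝ, 0 ≤ p → 0 ≤ q → p + q = 1 →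
      p * Fbel ρ β ξ J a x + q * Fbel ρ β ξ J a y
        ≤ Fbel ρ β ξ J a (p * x + q * y) := by
    intro a ha x hx y hy p q hp hq hpq
    rw [hF, hF, hF]
    have hcc := hc1 a ha
    have hc0 : (0 : ℝ) < Real.exp (ρ * a) := Real.exp_pos _
    have hgx := gmem hcc hx.1
    have hgy := gmem hcc hy.1
    have hmid : p * x + q * y ∈ Set.Ioc (0 : ℝ) 1 := by
      have := (convex_Ioc (0 : ℝ) 1) hx hy hp hq hpq
      simpa [smul_eq_mul] using this
    have hcomb : p * (x * Real.exp (ρ * a) / (1 + x * Real.exp (ρ * a)))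
        + q * (y * Real.exp (ρ * a) / (1 + y * Real.exp (ρ * a)))
        ∈ Set.Ioc (0 : ℝ) 1 := by
      have := (convex_Ioc (0 : ℝ) 1) hgx hgy hp hq hpq
      simpa [smul_eq_mul] using this
    have hJ1 : p * J (x * Real.exp (ρ * a) / (1 + x * Real.exp (ρ * a)))
        + q * J (y * Real.exp (ρ * a) / (1 + y * Real.exp (ρ * a)))
        ≤ J (p * (x * Real.exp (ρ * a) / (1 + x * Real.exp (ρ * a)))
            + q * (y * Real.exp (ρ * a) / (1 + y * Real.exp (ρ * a)))) := by
      have := hJconc.2 hgx hgy hp hq hpq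
      simpa [smul_eq_mul] using this
    have hJ2 : J (p * (x * Real.exp (ρ * a) / (1 + x * Real.exp (ρ * a)))
            + q * (y * Real.exp (ρ * a) / (1 + y * Real.exp (ρ * a))))
        ≤ J ((p * x + q * y) * Real.exp (ρ * a)
            / (1 + (p * x + q * y) * Real.exp (ρ * a))) :=
      hJmono hcomb (gmem hcc hmid.1) (gconc hc0 hx.1 hy.1 hp hq hpq)
    have hJle := hJ1.trans hJ2
    have hE0 : 0 ≤ Real.exp (-β * a) := (Real.exp_pos _).le
    have hkey : p * (x * (Real.exp (ρ * a) - 1) + ξ +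
            J (x * Real.exp (ρ * a) / (1 + x * Real.exp (ρ * a))))
        + q * (y * (Real.exp (ρ * a) - 1) + ξ +
            J (y * Real.exp (ρ * a) / (1 + y * Real.exp (ρ * a))))
        ≤ (p * x + q * y) * (Real.exp (ρ * a) - 1) + ξ +
            J ((p * x + q * y) * Real.exp (ρ * a)
              / (1 + (p * x + q * y) * Real.exp (ρ * a))) := by
      nlinarith
    nlinarith [mul_le_mul_of_nonneg_left hkey hE0]
  constructor
  · -- monotone
    intro x hx y hy hxy
    rw [hTJ' x hx, hTJ' y hy]
    apply le_csInf (hne y)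
    rintro v ⟨a, ha, rfl⟩
    calc sInf {v : ℝ | ∃ a : ℝ, 0 ≤ a ∧ v = Fbel ρ β ξ J a x}
        ≤ Fbel ρ β ξ J a x := csInf_le (hbdd x hx) ⟨a, ha, rfl⟩
      _ ≤ Fbel ρ β ξ J a y := hFmono a ha x hx y hy hxy
  · -- concave
    refine ⟨convex_Ioc 0 1, ?_⟩
    intro x hx y hy p q hp hq hpq
    have hmid : p • x + q • y ∈ Set.Ioc (0 : ℝ) 1 :=
      (convex_Ioc (0 : ℝ) 1) hx hy hp hq hpq
    simp only [smul_eq_mul] at hmid ⊢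
    rw [hTJ' x hx, hTJ' y hy, hTJ' _ hmid]
    apply le_csInf (hne _)
    rintro v ⟨a, ha, rfl⟩
    have h1 : sInf {v : ℝ | ∃ a : ℝ, 0 ≤ a ∧ v = Fbel ρ β ξ J a x}
        ≤ Fbel ρ β ξ J a x := csInf_le (hbdd x hx) ⟨a, ha, rfl⟩
    have h2 : sInf {v : ℝ | ∃ a : ℝ, 0 ≤ a ∧ v = Fbel ρ β ξ J a y}
        ≤ Fbel ρ β ξ J a y := csInf_le (hbdd y hy) ⟨a, ha, rfl⟩
    have h3 := hFconc a ha x hx y hy p q hp hq hpq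
    nlinarith [mul_le_mul_of_nonneg_left h1 hp, mul_le_mul_of_nonneg_left h2 hq]
end
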